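/- arXiv:1712.01033 — 8 statements merged into one kernel-verified Lean document; each statement's English description precedes it below -/
import Mathlib

section
/- Let H be a d×d real matrix, e ∈ ℝᵈ a nonzero vector with H e = λ e for some λ ∈ ℝ, and let η, ζ ∈ ℝ. Suppose μ ∈ ℝ, μ ≠ 0, satisfies the quadratic equation μ² − (1+ζ)(1−ηλ)μ + ζ(1−ηλ) = 0. Then the stacked vector v = (e, μ⁻¹·e) ∈ ℝ²ᵈ is an eigenvector of the block matrix A with eigenvalue μ, i.e., A·v = μ·v. -/
/-- The block matrix arising from Nesterov's accelerated gradient iteration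
on the quadratic `u ↦ ½uᵀHu`:
`A = [[(1+ζ)(I−ηH), −ζ(I−ηH)], [I, 0]]`. -/
noncomputable def nagBlockMatrix {d : ℕ} (η ζ : ℝ) (H : Matrix (Fin d) (Fin d) ℝ) :
    Matrix (Fin d ⊕ Fin d) (Fin d ⊕ Fin d) ℝ :=
  Matrix.fromBlocks ((1 + ζ) • (1 - η • H)) ((-ζ) • (1 - η • H)) 1 0

/-- If `H e = λ e` with `e ≠ 0`, and `μ ≠ 0` is a root of
`μ² − (1+ζ)(1−ηλ)μ + ζ(1−ηλ) = 0`, then `(e, μ⁻¹ e)` is an eigenvector of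
the NAG block matrix `A` with eigenvalue `μ`. -/
theorem stmt0 {d : ℕ} (H : Matrix (Fin d) (Fin d) ℝ) (e : Fin d → ℝ)
    (he : e ≠ 0) (lam η ζ μ : ℝ) (heig : H.mulVec e = lam • e) (hμ : μ ≠ 0)
    (hroot : μ ^ 2 - (1 + ζ) * (1 - η * lam) * μ + ζ * (1 - η * lam) = 0) :
    (nagBlockMatrix η ζ H).mulVec (Sum.elim e (μ⁻¹ • e)) =
      μ • (Sum.elim e (μ⁻¹ • e)) := by
  have hM : (1 - η • H).mulVec e = (1 - η * lam) • e := by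
    rw [Matrix.sub_mulVec, Matrix.one_mulVec, Matrix.smul_mulVec, heig, smul_smul]
    ext i; simp [sub_smul]; ring
  have hscal : (1 + ζ) * (1 - η * lam) + (-ζ) * (μ⁻¹ * (1 - η * lam)) = μ := by
    field_simp
    nlinarith [hroot]
  unfold nagBlockMatrix
  rw [Matrix.fromBlocks_mulVec]
  have htop : ((1 + ζ) • (1 - η • H)).mulVec e + ((-ζ) • (1 - η • H)).mulVec (μ⁻¹ • e)
      = μ • e := by
    rw [Matrix.smul_mulVec, Matrix.smul_mulVec, Matrix.mulVec_smul, hM,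
      smul_smul, smul_smul, smul_smul, ← add_smul, mul_assoc, hscal]
  ext i
  cases i with
  | inl i => simpa using congrFun htop i
  | inr i => simp [Matrix.one_mulVec, Matrix.zero_mulVec, hμ]
end

section
/- Let H be a d×d real symmetric matrix, η, ζ ∈ ℝ, and let A be the associated 2d×2d block matrix. If z ∈ ℂ is a nonzero eigenvalue of A (viewed as a complex matrix), then there exists a real eigenvalue λ of H such that z² − (1+ζ)(1−ηλ)z + ζ(1−ηλ) = 0. -/
open Matrix
/-- If `H` is symmetric and `z ∈ ℂ` is a nonzero eigenvalue of the NAG block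
matrix `A` (viewed as a complex matrix), then there is a real eigenvalue `λ`
of `H` with `z² − (1+ζ)(1−ηλ)z + ζ(1−ηλ) = 0`. -/
theorem stmt1 {d : ℕ} (H : Matrix (Fin d) (Fin d) ℝ) (hH : H.IsSymm)
    (η ζ : ℝ) (z : ℂ) (hz : z ≠ 0)
    (heig : ∃ v : Fin d ⊕ Fin d → ℂ, v ≠ 0 ∧
      ((nagBlockMatrix η ζ H).map (Complex.ofReal)).mulVec v = z • v) :
    ∃ lam : ℝ, (∃ e : Fin d → ℝ, e ≠ 0 ∧ H.mulVec e = lam • e) ∧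
      z ^ 2 - (((1 + ζ) * (1 - η * lam) : ℝ) : ℂ) * z
        + ((ζ * (1 - η * lam) : ℝ) : ℂ) = 0 := by
  classical
  obtain ⟨v, hv, hAv⟩ := heig
  have hHer : H.IsHermitian := by
    rwa [Matrix.IsHermitian, Matrix.conjTranspose_eq_transpose_of_trivial]
  set Hc : Matrix (Fin d) (Fin d) ℂ := H.map Complex.ofReal with hHcdef
  set x : Fin d → ℂ := fun i => v (Sum.inl i) with hxdef
  set y : Fin d → ℂ := fun i => v (Sum.inr i) with hydef
  have hv' : v = Sum.elim x y := by funext i; cases i <;> rfl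
  have hmap : (nagBlockMatrix η ζ H).map Complex.ofReal
      = Matrix.fromBlocks (((1 + ζ : ℝ) : ℂ) • (1 - (η : ℂ) • Hc))
          (((-ζ : ℝ) : ℂ) • (1 - (η : ℂ) • Hc)) 1 0 := by
    ext i j
    cases i <;> cases j <;>
      simp [nagBlockMatrix, Matrix.map_apply, Matrix.one_apply, Hc,
        apply_ite Complex.ofReal] <;> split_ifs <;> push_cast <;> ring
  rw [hmap, hv', Matrix.fromBlocks_mulVec] at hAv
  simp only [Sum.elim_comp_inl, Sum.elim_comp_inr] at hAv
  have h2 : ∀ i, x i = z * y i := by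
    intro i
    have := congrFun hAv (Sum.inr i)
    simpa [Matrix.one_mulVec, Matrix.zero_mulVec] using this
  have hxy : x = z • y := by funext i; simpa using h2 i
  have hHcx : Hc *ᵥ x = z • (Hc *ᵥ y) := by rw [hxy, Matrix.mulVec_smul]
  set c : ℂ := ((1 + ζ : ℝ) : ℂ) * z - (ζ : ℂ) with hcdef
  have key : ∀ i, (c * (η : ℂ)) * (Hc *ᵥ y) i = (c - z ^ 2) * y i := by
    intro i
    have e1 := congrFun hAv (Sum.inl i)
    simp only [Sum.elim_inl, Pi.add_apply, Matrix.smul_mulVec, Matrix.sub_mulVec,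
      Matrix.one_mulVec, Pi.smul_apply, Pi.sub_apply, smul_eq_mul,
      Sum.elim_comp_inl, Sum.elim_comp_inr] at e1
    have hXi : (Hc *ᵥ x) i = z * (Hc *ᵥ y) i := by rw [hHcx]; simp
    have hxi : x i = z * y i := h2 i
    rw [hxi, hXi] at e1
    rw [hcdef]
    push_cast at e1 ⊢
    linear_combination (-1 : ℂ) * e1
  have hy : y ≠ 0 := by
    intro h0
    apply hv
    funext i
    cases i with
    | inl i =>
        have : y i = 0 := congrFun h0 i
        show x i = 0
        rw [h2 i, this, mul_zero]
    | inr i => exact congrFun h0 i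
  obtain ⟨i0, hi0⟩ := Function.ne_iff.mp hy
  by_cases hcη : c * (η : ℂ) = 0
  · -- degenerate case: z ^ 2 = c and η = 0
    have hz2 : z ^ 2 = c := by
      have h := key i0
      rw [hcη, zero_mul] at h
      have := (mul_eq_zero.mp h.symm).resolve_right hi0
      exact (sub_eq_zero.mp this).symm
    have hc0 : c ≠ 0 := fun h => hz (by
      have : z ^ 2 = 0 := hz2.trans h
      exact pow_eq_zero_iff (n := 2) (by norm_num) |>.mp this)
    have hη : η = 0 := by
      rcases mul_eq_zero.mp hcη with h | h
      · exact absurd h hc0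
      · exact_mod_cast h
    refine ⟨hHer.eigenvalues i0, ⟨hHer.eigenvectorBasis i0,
      ?_, hHer.mulVec_eigenvectorBasis i0⟩, ?_⟩
    · have := hHer.eigenvectorBasis.orthonormal.ne_zero i0
      intro h
      apply this
      ext j
      exact congrFun h j
    · rw [hη]
      push_cast
      rw [hcdef] at hz2
      push_cast at hz2
      linear_combination hz2
  · -- main case
    have hc0 : c ≠ 0 := fun h => hcη (by rw [h, zero_mul])
    set μ : ℂ := (c - z ^ 2) / (c * (η : ℂ)) with hμdef
    have heq : Hc *ᵥ y = μ • y := by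
      funext i
      have h := key i
      rw [hμdef]
      simp only [Pi.smul_apply, smul_eq_mul]
      rw [div_mul_eq_mul_div, eq_div_iff hcη]
      linear_combination h
    -- μ is real
    set s : ℂ := ∑ i, (starRingEnd ℂ) (y i) * y i with hsdef
    have hs_real : (starRingEnd ℂ) s = s := by
      rw [hsdef, map_sum]
      refine Finset.sum_congr rfl fun i _ => ?_
      simp [mul_comm]
    have hs_ne : s ≠ 0 := by
      intro h
      apply hi0
      have : (∑ i, Complex.normSq (y i) : ℝ) = 0 := by
        have := h
        rw [hsdef] at this
        have h2 : ((∑ i, Complex.normSq (y i) : ℝ) : ℂ) = 0 := by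
          push_cast
          rw [← this]
          refine Finset.sum_congr rfl fun i _ => ?_
          rw [Complex.normSq_eq_conj_mul_self]
        exact_mod_cast h2
      have hall := (Finset.sum_eq_zero_iff_of_nonneg
        (fun i _ => Complex.normSq_nonneg (y i))).mp this i0 (Finset.mem_univ _)
      exact Complex.normSq_eq_zero.mp hall
    have hT : μ * s = (starRingEnd ℂ) μ * s := by
      have hTval : ∑ i, (starRingEnd ℂ) (y i) * (Hc *ᵥ y) i = μ * s := by
        rw [hsdef, Finset.mul_sum]
        refine Finset.sum_congr rfl fun i _ => ?_
        rw [heq]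
        simp only [Pi.smul_apply, smul_eq_mul]
        ring
      have hTconj : (starRingEnd ℂ) (∑ i, (starRingEnd ℂ) (y i) * (Hc *ᵥ y) i)
          = ∑ i, (starRingEnd ℂ) (y i) * (Hc *ᵥ y) i := by
        simp only [Matrix.mulVec, dotProduct, Matrix.map_apply, Hc,
          Finset.mul_sum, map_sum, _root_.map_mul, Complex.conj_conj, Complex.conj_ofReal]
        rw [Finset.sum_comm]
        refine Finset.sum_congr rfl fun i _ => Finset.sum_congr rfl fun j _ => ?_
        rw [hH.apply i j]
        ring
      calc μ * s = (starRingEnd ℂ) (μ * s) := by rw [← hTval, hTconj, hTval]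
        _ = (starRingEnd ℂ) μ * s := by rw [_root_.map_mul, hs_real]
    have hμ_real : μ = ((μ.re : ℝ) : ℂ) := by
      have : ((starRingEnd ℂ) μ - μ) * s = 0 := by linear_combination -hT
      have h := (mul_eq_zero.mp this).resolve_right hs_ne
      have hconj : (starRingEnd ℂ) μ = μ := by linear_combination h
      exact (Complex.conj_eq_iff_re.mp hconj).symm
    set lam : ℝ := μ.re with hlamdef
    -- real eigenvector via determinant
    have hker : (Hc - (lam : ℂ) • 1) *ᵥ y = 0 := by
      rw [Matrix.sub_mulVec, heq, Matrix.smul_mulVec, Matrix.one_mulVec, ← hμ_real]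
      simp
    have hdetC : (Hc - (lam : ℂ) • 1).det = 0 :=
      Matrix.exists_mulVec_eq_zero_iff.mp ⟨y, hy, hker⟩
    have hmapsub : Hc - (lam : ℂ) • 1 = (H - lam • 1).map Complex.ofReal := by
      ext i j
      simp [Hc, Matrix.map_apply, Matrix.one_apply, apply_ite Complex.ofReal]
    have hdetR : (H - lam • 1).det = 0 := by
      have h1 : Complex.ofRealHom ((H - lam • 1).det) = 0 := by
        rw [RingHom.map_det, RingHom.mapMatrix_apply]
        show ((H - lam • 1).map Complex.ofReal).det = 0
        rw [← hmapsub]; exact hdetC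
      simpa using h1
    obtain ⟨e, he0, hee⟩ := Matrix.exists_mulVec_eq_zero_iff.mpr hdetR
    have heig' : H *ᵥ e = lam • e := by
      have := hee
      rw [Matrix.sub_mulVec, Matrix.smul_mulVec, Matrix.one_mulVec, sub_eq_zero] at this
      exact this
    refine ⟨lam, ⟨e, he0, heig'⟩, ?_⟩
    -- polynomial identity
    have hμeq : c * (η : ℂ) * ((lam : ℝ) : ℂ) = c - z ^ 2 := by
      rw [← hμ_real, hμdef, mul_comm (c * (η : ℂ))]
      exact div_mul_cancel₀ _ hcη
    rw [hcdef] at hμeq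
    push_cast at hμeq ⊢
    linear_combination hμeq
end

section
/- Let γ > 0, η > 0 with ηγ < 1, set t = √(ηγ) and ζ = 1 − t, and let λ ≤ −γ. Then the discriminant D = (1+ζ)²(1−ηλ)² − 4ζ(1−ηλ) is strictly positive, and the larger root μ = ½[(1+ζ)(1−ηλ) + √D] of the quadratic z² − (1+ζ)(1−ηλ)z + ζ(1−ηλ) = 0 satisfies μ ≥ 1 + √(ηγ)/2. -/
/-- For `γ > 0`, `η > 0` with `ηγ < 1`, momentum `ζ = 1 − √(ηγ)`, and
`λ ≤ −γ`, the discriminant `D = (1+ζ)²(1−ηλ)² − 4ζ(1−ηλ)` of the quadratic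
`z² − (1+ζ)(1−ηλ)z + ζ(1−ηλ)` is positive, the larger root
`μ = ½[(1+ζ)(1−ηλ) + √D]` is indeed a root, and `μ ≥ 1 + √(ηγ)/2`. -/
theorem stmt2 (γ η lam ζ : ℝ) (hγ : 0 < γ) (hη : 0 < η) (hηγ : η * γ < 1)
    (hζ : ζ = 1 - Real.sqrt (η * γ)) (hlam : lam ≤ -γ) :
    0 < (1 + ζ) ^ 2 * (1 - η * lam) ^ 2 - 4 * ζ * (1 - η * lam) ∧
    (((1 + ζ) * (1 - η * lam) +
        Real.sqrt ((1 + ζ) ^ 2 * (1 - η * lam) ^ 2 - 4 * ζ * (1 - η * lam))) / 2) ^ 2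
      - (1 + ζ) * (1 - η * lam) *
        (((1 + ζ) * (1 - η * lam) +
          Real.sqrt ((1 + ζ) ^ 2 * (1 - η * lam) ^ 2 - 4 * ζ * (1 - η * lam))) / 2)
      + ζ * (1 - η * lam) = 0 ∧
    1 + Real.sqrt (η * γ) / 2 ≤
      ((1 + ζ) * (1 - η * lam) +
        Real.sqrt ((1 + ζ) ^ 2 * (1 - η * lam) ^ 2 - 4 * ζ * (1 - η * lam))) / 2 := by
  set t : ℝ := Real.sqrt (η * γ) with ht
  have hηγ0 : 0 < η * γ := mul_pos hη hγ
  have ht2 : t ^ 2 = η * γ := Real.sq_sqrt hηγ0.le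
  have ht0 : 0 < t := Real.sqrt_pos.mpr hηγ0
  have ht1 : t < 1 := by
    rw [ht, show (1 : ℝ) = Real.sqrt 1 by simp]
    exact Real.sqrt_lt_sqrt hηγ0.le hηγ
  set x : ℝ := 1 - η * lam with hx
  have hx1 : 1 + t ^ 2 ≤ x := by
    have : η * lam ≤ -(η * γ) := by nlinarith
    rw [hx, ht2]; linarith
  set D : ℝ := (1 + ζ) ^ 2 * x ^ 2 - 4 * ζ * x with hD
  have hDpos : 0 < D := by
    have h1 : (1 : ℝ) ≤ x := by nlinarith
    rw [hD, hζ]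
    have hx0 : (0:ℝ) < x := by linarith
    nlinarith [mul_nonneg (by linarith : (0:ℝ) ≤ x - 1) (sq_nonneg (2 - t)),
      mul_pos hx0 (mul_pos ht0 ht0)]
  have hsD : Real.sqrt D ^ 2 = D := Real.sq_sqrt hDpos.le
  have hsDnn : 0 ≤ Real.sqrt D := Real.sqrt_nonneg D
  refine ⟨hDpos, ?_, ?_⟩
  · linear_combination (1 / 4 : ℝ) * hsD
  · -- q(1 + t/2) ≤ 0, hence √D ≥ 2(1+t/2) - b
    have hq : (1 + t / 2) ^ 2 - (1 + ζ) * x * (1 + t / 2) + ζ * x ≤ 0 := by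
      rw [hζ]
      nlinarith [sq_nonneg t, mul_pos ht0 ht0, mul_pos (mul_pos ht0 ht0) ht0]
    have hsq : (2 * (1 + t / 2) - (1 + ζ) * x) ^ 2 ≤ D := by
      rw [hD]; nlinarith
    have hle : 2 * (1 + t / 2) - (1 + ζ) * x ≤ Real.sqrt D := by
      nlinarith [hsD, hsDnn]
    linarith
end

section
/- Let η ≥ 0, ζ ∈ (0,1], and λ ≥ 0 with ηλ ≤ 1. Then every complex root z of the quadratic z² − (1+ζ)(1−ηλ)z + ζ(1−ηλ) = 0 satisfies |z| ≤ 1. -/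
/-- For `η ≥ 0`, `ζ ∈ (0,1]`, `λ ≥ 0` with `ηλ ≤ 1`, every complex root of
`z² − (1+ζ)(1−ηλ)z + ζ(1−ηλ) = 0` has modulus at most `1`. -/
theorem stmt4 (η ζ lam : ℝ) (hη : 0 ≤ η) (hζ0 : 0 < ζ) (hζ1 : ζ ≤ 1)
    (hlam : 0 ≤ lam) (hetalam : η * lam ≤ 1) (z : ℂ)
    (hroot : z ^ 2 - (((1 + ζ) * (1 - η * lam) : ℝ) : ℂ) * z
        + ((ζ * (1 - η * lam) : ℝ) : ℂ) = 0) :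
    ‖z‖ ≤ 1 := by
  set c : ℝ := 1 - η * lam with hc
  have hc0 : 0 ≤ c := by simp only [hc]; linarith
  have hc1 : c ≤ 1 := by
    have : 0 ≤ η * lam := mul_nonneg hη hlam
    simp only [hc]; linarith
  set a : ℝ := (1 + ζ) * c with ha
  set b : ℝ := ζ * c with hb
  have ha0 : 0 ≤ a := mul_nonneg (by linarith) hc0
  have ha2 : a ≤ 2 := by nlinarith
  have hb0 : 0 ≤ b := mul_nonneg hζ0.le hc0
  have hb1 : b ≤ 1 := mul_le_one₀ hζ1 hc0 hc1
  have hab : a - b = c := by simp only [ha, hb]; ring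
  have hroot' : z ^ 2 - (a : ℂ) * z + (b : ℂ) = 0 := hroot
  rcases le_or_gt 0 (a ^ 2 - 4 * b) with hD0 | hD0
  · -- real roots
    set s : ℝ := Real.sqrt (a ^ 2 - 4 * b) with hs
    have hs2 : s ^ 2 = a ^ 2 - 4 * b := Real.sq_sqrt hD0
    have hs0 : 0 ≤ s := Real.sqrt_nonneg _
    have hs2c : (s : ℂ) ^ 2 = (a : ℂ) ^ 2 - 4 * (b : ℂ) := by exact_mod_cast hs2
    have hfac : (z - (((a + s) / 2 : ℝ) : ℂ)) * (z - (((a - s) / 2 : ℝ) : ℂ)) = 0 := by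
      push_cast
      linear_combination hroot' - (1 / 4 : ℂ) * hs2c
    -- bounds on the real roots
    have hsa : s ≤ a := by
      have : s ≤ Real.sqrt (a ^ 2) := Real.sqrt_le_sqrt (by linarith)
      rwa [Real.sqrt_sq ha0] at this
    have hs2a : s ≤ 2 - a := by
      have h1 : a ^ 2 - 4 * b ≤ (2 - a) ^ 2 := by nlinarith
      have : s ≤ Real.sqrt ((2 - a) ^ 2) := Real.sqrt_le_sqrt h1
      rwa [Real.sqrt_sq (by linarith)] at this
    rcases mul_eq_zero.mp hfac with h | h
    · rw [sub_eq_zero] at h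
      rw [h, Complex.norm_real, Real.norm_eq_abs, abs_le]
      constructor <;> [linarith; linarith]
    · rw [sub_eq_zero] at h
      rw [h, Complex.norm_real, Real.norm_eq_abs, abs_le]
      constructor <;> [linarith; linarith]
  · -- complex conjugate roots
    set s : ℝ := Real.sqrt (4 * b - a ^ 2) with hs
    have hs2 : s ^ 2 = 4 * b - a ^ 2 := Real.sq_sqrt (by linarith)
    have hs2c : (s : ℂ) ^ 2 = 4 * (b : ℂ) - (a : ℂ) ^ 2 := by exact_mod_cast hs2
    have hI : Complex.I ^ 2 = -1 := Complex.I_sq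
    have hsi : ((s : ℂ) * Complex.I) ^ 2 = (a : ℂ) ^ 2 - 4 * (b : ℂ) := by
      rw [mul_pow, hI, hs2c]; ring
    have hfac : (z - ((a : ℂ) + s * Complex.I) / 2) * (z - ((a : ℂ) - s * Complex.I) / 2) = 0 := by
      linear_combination hroot' - (1 / 4 : ℂ) * hsi
    have habs : ‖z‖ ^ 2 ≤ 1 := by
      rcases mul_eq_zero.mp hfac with h | h <;> rw [sub_eq_zero] at h <;>
        rw [h, norm_div, Complex.norm_two] <;>
        · rw [div_pow, Complex.sq_norm, Complex.normSq_apply]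
          simp only [Complex.add_re, Complex.add_im, Complex.sub_re, Complex.sub_im,
            Complex.mul_re, Complex.mul_im, Complex.I_re, Complex.I_im,
            Complex.ofReal_re, Complex.ofReal_im]
          nlinarith [hs2]
    nlinarith [norm_nonneg z, habs]
end

section
/- Let H be a d×d real symmetric matrix with eigenvalue λ ≤ −γ where γ > 0, let η > 0 with ηγ < 1, and set ζ = 1 − √(ηγ). Then the 2d×2d block matrix A = [[(1+ζ)(I−ηH), −ζ(I−ηH)], [I, 0]] has a real eigenvalue μ with μ ≥ 1 + √(ηγ)/2. -/
/-- If the symmetric matrix `H` has an eigenvalue `λ ≤ −γ < 0`, `η > 0` with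
`ηγ < 1`, and `ζ = 1 − √(ηγ)`, then the NAG block matrix `A` has a real
eigenvalue `μ ≥ 1 + √(ηγ)/2`. -/
theorem stmt5 {d : ℕ} (H : Matrix (Fin d) (Fin d) ℝ) (hH : H.IsSymm)
    (γ η ζ lam : ℝ) (hγ : 0 < γ) (hη : 0 < η) (hηγ : η * γ < 1)
    (hζ : ζ = 1 - Real.sqrt (η * γ)) (hlam : lam ≤ -γ)
    (heig : ∃ e : Fin d → ℝ, e ≠ 0 ∧ H.mulVec e = lam • e) :
    ∃ μ : ℝ, 1 + Real.sqrt (η * γ) / 2 ≤ μ ∧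
      ∃ v : Fin d ⊕ Fin d → ℝ, v ≠ 0 ∧
        (nagBlockMatrix η ζ H).mulVec v = μ • v := by
  obtain ⟨e, he, heq⟩ := heig
  set s := Real.sqrt (η * γ) with hs
  have hηγ0 : 0 < η * γ := mul_pos hη hγ
  have hs0 : 0 < s := Real.sqrt_pos.mpr hηγ0
  have hss : s * s = η * γ := Real.mul_self_sqrt hηγ0.le
  have hs1 : s < 1 := by nlinarith
  set b := 1 - η * lam with hb
  have hbge : 1 + s * s ≤ b := by
    have : η * lam ≤ η * (-γ) := mul_le_mul_of_nonneg_left hlam hη.le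
    simp only [hb]; nlinarith
  have hζ0 : 0 ≤ ζ := by rw [hζ]; linarith
  have hb1 : 1 ≤ b := by nlinarith
  set f : ℝ → ℝ := fun μ => μ ^ 2 - (1 + ζ) * b * μ + ζ * b with hf
  set t : ℝ := 1 + s / 2 with htdef
  set M : ℝ := (1 + ζ) * b + 1 with hM
  have htM : t ≤ M := by
    have : (1 : ℝ) ≤ (1 + ζ) * b := by nlinarith
    simp only [htdef, hM]; nlinarith
  have hft : f t ≤ 0 := by
    simp only [hf, htdef, hζ]
    nlinarith [sq_nonneg s, hs0.le, hs1.le,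
      mul_le_mul_of_nonneg_right hbge (show (0:ℝ) ≤ 1 + s - s * s / 2 by nlinarith),
      mul_nonneg (mul_nonneg (mul_nonneg hs0.le hs0.le) hs0.le) (show (0:ℝ) ≤ 1 - s by linarith)]
  have hfM : 0 ≤ f M := by simp only [hf, hM]; nlinarith
  have hcont : ContinuousOn f (Set.Icc t M) := (by fun_prop : Continuous f).continuousOn
  have h0 : (0:ℝ) ∈ Set.Icc (f t) (f M) := ⟨hft, hfM⟩
  obtain ⟨μ, hμmem, hμ0⟩ := intermediate_value_Icc htM hcont h0
  have hroot : μ ^ 2 = (1 + ζ) * b * μ - ζ * b := by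
    have := hμ0; simp only [hf] at this; linarith [this]
  have hkey : (1 - η • H).mulVec e = b • e := by
    rw [Matrix.sub_mulVec, Matrix.smul_mulVec, heq, Matrix.one_mulVec]
    funext i
    simp only [Pi.sub_apply, Pi.smul_apply, smul_eq_mul, hb]
    ring
  refine ⟨μ, hμmem.1, Sum.elim (μ • e) e, ?_, ?_⟩
  · intro h
    apply he
    funext i
    have := congrFun h (Sum.inr i)
    simpa using this
  · rw [nagBlockMatrix, Matrix.fromBlocks_mulVec]
    funext i
    cases i with
    | inl i =>
      simp only [Sum.elim_inl, Sum.elim_comp_inl, Sum.elim_comp_inr, Pi.add_apply,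
        Matrix.smul_mulVec, Matrix.mulVec_smul, hkey, Pi.smul_apply, smul_eq_mul]
      rw [hb] at hroot
      simp only [hb]
      linear_combination (-(e i)) * hroot
    | inr i =>
      simp [Matrix.one_mulVec]
end

section
/- Let f : ℝᵈ → ℝ be twice continuously differentiable with L₂-Lipschitz continuous Hessian (‖∇²f(a) − ∇²f(b)‖ ≤ L₂‖a − b‖ in operator norm for all a, b), let x ∈ ℝᵈ, and let 𝓕 > 0, U > 0 satisfy L₂U³ ≤ 6𝓕. If u ∈ ℝᵈ satisfies 0 < ‖u‖ ≤ U and f̂ₓ(u) ≤ −2𝓕, then ⟨u, ∇²f(x)u⟩ / ‖u‖² ≤ −2𝓕/U². In particular, u is a negative curvature direction of ∇²f at x. -/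
open RealInnerProductSpace

set_option maxHeartbeats 1000000 in
/-- NEON⁺ certificate: if `f` is `C²` with `L₂`-Lipschitz Hessian,
`L₂U³ ≤ 6𝓕` with `𝓕, U > 0`, and `u` satisfies `0 < ‖u‖ ≤ U` and
`f̂ₓ(u) = f(x+u) − f(x) − ⟨∇f(x), u⟩ ≤ −2𝓕`, then
`⟨u, ∇²f(x)u⟩/‖u‖² ≤ −2𝓕/U²`, i.e. `u` is a negative curvature direction. -/
theorem stmt9 {d : ℕ} (f : EuclideanSpace ℝ (Fin d) → ℝ) (L₂ : ℝ)
    (hf : ContDiff ℝ 2 f)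
    (hLip : ∀ a b : EuclideanSpace ℝ (Fin d),
      ‖fderiv ℝ (gradient f) a - fderiv ℝ (gradient f) b‖ ≤ L₂ * ‖a - b‖)
    (x : EuclideanSpace ℝ (Fin d)) (F U : ℝ) (hF : 0 < F) (hU : 0 < U)
    (hFU : L₂ * U ^ 3 ≤ 6 * F) (u : EuclideanSpace ℝ (Fin d))
    (hu0 : 0 < ‖u‖) (huU : ‖u‖ ≤ U)
    (hval : f (x + u) - f x - ⟪gradient f x, u⟫ ≤ -2 * F) :
    ⟪u, fderiv ℝ (gradient f) x u⟫ / ‖u‖ ^ 2 ≤ -2 * F / U ^ 2 := by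
  set g : EuclideanSpace ℝ (Fin d) → EuclideanSpace ℝ (Fin d) := gradient f with hg
  set H := fun y => fderiv ℝ g y with hH
  -- L₂ ≥ 0
  have hL₂ : 0 ≤ L₂ := by
    by_contra hc
    push_neg at hc
    have h := hLip (x + u) x
    have h3 : ‖x + u - x‖ = ‖u‖ := by simp
    rw [h3] at h
    nlinarith [norm_nonneg (fderiv ℝ g (x + u) - fderiv ℝ g x)]
  -- gradient f is C¹
  have hgC1 : ContDiff ℝ 1 g := by
    have h1 : ContDiff ℝ 1 (fderiv ℝ f) := hf.fderiv_right (m := 1) (by norm_num)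
    exact ((InnerProductSpace.toDual ℝ (EuclideanSpace ℝ (Fin d))).symm.contDiff).comp h1
  have hgdiff : Differentiable ℝ g := hgC1.differentiable one_ne_zero
  have hfdiff : Differentiable ℝ f := hf.differentiable two_ne_zero
  -- line derivative
  have hline : ∀ t : ℝ, HasDerivAt (fun s : ℝ => x + s • u) u t := by
    intro t
    simpa using ((hasDerivAt_id t).smul_const u).const_add x
  -- inner product identity
  have hinner : ∀ (y v : EuclideanSpace ℝ (Fin d)), ⟪g y, v⟫ = fderiv ℝ f y v := by
    intro y v
    have h := (InnerProductSpace.toDual ℝ (EuclideanSpace ℝ (Fin d))).apply_symm_apply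
      (fderiv ℝ f y)
    calc ⟪g y, v⟫ = (InnerProductSpace.toDual ℝ (EuclideanSpace ℝ (Fin d))) (g y) v := rfl
      _ = fderiv ℝ f y v := by rw [hg, gradient, h]
  -- Step 1: bound on gradient difference
  set G : ℝ → EuclideanSpace ℝ (Fin d) := fun t => g (x + t • u) - g x - t • (H x u) with hGdef
  have hG' : ∀ t : ℝ, HasDerivAt G (H (x + t • u) u - H x u) t := by
    intro t
    have h1 : HasDerivAt (fun s : ℝ => g (x + s • u)) (H (x + t • u) u) t :=
      by have := ((hgdiff (x + t • u)).hasFDerivAt).comp_hasDerivAt t (hline t); exact this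
    have h2 : HasDerivAt (fun s : ℝ => s • (H x u)) (H x u) t := by
      simpa using (hasDerivAt_id t).smul_const (H x u)
    exact (h1.sub_const (g x)).sub h2
  have hGbound : ∀ t ∈ Set.Icc (0:ℝ) 1, ‖G t‖ ≤ L₂ * ‖u‖ ^ 2 / 2 * t ^ 2 := by
    have hB : ∀ t : ℝ, HasDerivAt (fun t : ℝ => L₂ * ‖u‖ ^ 2 / 2 * t ^ 2)
        (L₂ * ‖u‖ ^ 2 * t) t := by
      intro t
      have h := (hasDerivAt_pow 2 t).const_mul (L₂ * ‖u‖ ^ 2 / 2)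
      exact h.congr_deriv (by push_cast; ring)
    refine image_norm_le_of_norm_deriv_right_le_deriv_boundary
      (f := G) (f' := fun t => H (x + t • u) u - H x u) (a := 0) (b := 1)
      (fun t _ => (hG' t).continuousAt.continuousWithinAt)
      (fun t _ => (hG' t).hasDerivWithinAt) (by simp [hGdef]) hB ?_
    intro t ht
    have h1 : ‖H (x + t • u) u - H x u‖ ≤ ‖H (x + t • u) - H x‖ * ‖u‖ := by
      rw [← ContinuousLinearMap.sub_apply]
      exact ContinuousLinearMap.le_opNorm _ u
    have h2 : ‖H (x + t • u) - H x‖ ≤ L₂ * (t * ‖u‖) := by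
      have h := hLip (x + t • u) x
      have h3 : ‖x + t • u - x‖ = t * ‖u‖ := by
        rw [add_sub_cancel_left, norm_smul, Real.norm_eq_abs, abs_of_nonneg ht.1]
      rw [h3] at h
      exact h
    calc ‖H (x + t • u) u - H x u‖ ≤ L₂ * (t * ‖u‖) * ‖u‖ :=
          h1.trans (mul_le_mul_of_nonneg_right h2 (norm_nonneg u))
      _ = L₂ * ‖u‖ ^ 2 * t := by ring
  -- Step 2: Taylor bound for f
  set q : ℝ := ⟪H x u, u⟫ with hq
  set ψ : ℝ → ℝ := fun t => f (x + t • u) - f x - t * ⟪g x, u⟫ - t ^ 2 / 2 * q with hψ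
  have hψ' : ∀ t : ℝ, HasDerivAt ψ ⟪G t, u⟫ t := by
    intro t
    have h1 : HasDerivAt (fun s : ℝ => f (x + s • u)) (fderiv ℝ f (x + t • u) u) t :=
      ((hfdiff (x + t • u)).hasFDerivAt).comp_hasDerivAt t (hline t)
    have h2 : HasDerivAt (fun s : ℝ => s * ⟪g x, u⟫) ⟪g x, u⟫ t := by
      simpa using (hasDerivAt_id t).mul_const (⟪g x, u⟫ : ℝ)
    have h3 : HasDerivAt (fun s : ℝ => s ^ 2 / 2 * q) (t * q) t := by
      have h := ((hasDerivAt_pow 2 t).div_const 2).mul_const q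
      exact h.congr_deriv (by push_cast; ring)
    have h4 := ((h1.sub_const (f x)).sub h2).sub h3
    refine h4.congr_deriv ?_
    rw [hGdef]
    simp only [inner_sub_left, inner_smul_left, RCLike.ofReal_real_eq_id, id_eq,
      conj_trivial]
    rw [hinner (x + t • u) u, ← hq]
    try ring
  have hψbound : ∀ t ∈ Set.Icc (0:ℝ) 1, ‖ψ t‖ ≤ L₂ * ‖u‖ ^ 3 / 6 * t ^ 3 := by
    have hB : ∀ t : ℝ, HasDerivAt (fun t : ℝ => L₂ * ‖u‖ ^ 3 / 6 * t ^ 3)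
        (L₂ * ‖u‖ ^ 2 / 2 * t ^ 2 * ‖u‖) t := by
      intro t
      have h := (hasDerivAt_pow 3 t).const_mul (L₂ * ‖u‖ ^ 3 / 6)
      exact h.congr_deriv (by push_cast; ring)
    refine image_norm_le_of_norm_deriv_right_le_deriv_boundary
      (f := ψ) (f' := fun t => ⟪G t, u⟫) (a := 0) (b := 1)
      (fun t _ => (hψ' t).continuousAt.continuousWithinAt)
      (fun t _ => (hψ' t).hasDerivWithinAt) (by simp [hψ]) hB ?_
    intro t ht
    calc ‖(⟪G t, u⟫ : ℝ)‖ ≤ ‖G t‖ * ‖u‖ := norm_inner_le_norm _ _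
      _ ≤ L₂ * ‖u‖ ^ 2 / 2 * t ^ 2 * ‖u‖ :=
          mul_le_mul_of_nonneg_right (hGbound t (Set.mem_Icc.mpr ⟨ht.1, ht.2.le⟩)) (norm_nonneg u)
  -- conclude
  have h1 := hψbound 1 (Set.mem_Icc.mpr ⟨zero_le_one, le_refl 1⟩)
  have hψ1 : ψ 1 = f (x + u) - f x - ⟪g x, u⟫ - q / 2 := by
    simp [hψ]; ring
  rw [hψ1] at h1
  have hu3 : ‖u‖ ^ 3 ≤ U ^ 3 := pow_le_pow_left₀ (norm_nonneg u) huU 3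
  have hL3 : L₂ * ‖u‖ ^ 3 ≤ 6 * F := le_trans (by nlinarith) hFU
  have habs := abs_le.mp (by rwa [Real.norm_eq_abs] at h1)
  have hqle : q ≤ -2 * F := by nlinarith [habs.1]
  have hqu : (⟪u, fderiv ℝ (gradient f) x u⟫ : ℝ) = q := by
    rw [hq, real_inner_comm]
  rw [hqu, div_le_div_iff₀ (by positivity) (by positivity)]
  nlinarith [mul_le_mul_of_nonneg_left (pow_le_pow_left₀ (norm_nonneg u) huU 2)
    (le_of_lt (by linarith : (0:ℝ) < 2 * F))]
end

section
/- Let f : ℝᵈ → ℝ be twice continuously differentiable with L₂-Lipschitz continuous Hessian (‖∇²f(a) − ∇²f(b)‖ ≤ L₂‖a − b‖ in operator norm for all a, b), let x ∈ ℝᵈ and γ > 0. Suppose y, u ∈ ℝᵈ with y ≠ u satisfy Δₓ(y, u) < −(γ/2)‖y − u‖², where Δₓ(y, u) = f̂ₓ(y) − f̂ₓ(u) − ⟨∇f̂ₓ(u), y − u⟩. Then the direction d = y − u satisfies ⟨d, ∇²f(x)d⟩ / ‖d‖² < −γ + (L₂/3)‖y − u‖ + L₂‖u‖. -/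
open RealInnerProductSpace intervalIntegral

set_option maxHeartbeats 1000000
set_option synthInstance.maxHeartbeats 400000


private lemma taylor2 {n : ℕ} (f : EuclideanSpace ℝ (Fin n) → ℝ) (L : ℝ)
    (hf : ContDiff ℝ 2 f)
    (hLip : ∀ a b : EuclideanSpace ℝ (Fin n),
      ‖fderiv ℝ (gradient f) a - fderiv ℝ (gradient f) b‖ ≤ L * ‖a - b‖)
    (a v : EuclideanSpace ℝ (Fin n)) :
    |f (a + v) - f a - ⟪gradient f a, v⟫
      - 1 / 2 * ⟪fderiv ℝ (gradient f) a v, v⟫| ≤ L / 6 * ‖v‖ ^ 3 := by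
  set H := fderiv ℝ (gradient f) with hH
  have hg : ContDiff ℝ 1 (gradient f) := by
    have h1 : ContDiff ℝ 1 (fderiv ℝ f) := hf.fderiv_right (by norm_num)
    exact ((InnerProductSpace.toDual ℝ (EuclideanSpace ℝ (Fin n))).symm.contDiff).comp h1
  have hgd : Differentiable ℝ (gradient f) := hg.differentiable (by norm_num)
  have hfd : Differentiable ℝ f := hf.differentiable (by norm_num)
  have hHc : Continuous H := hg.continuous_fderiv (by norm_num)
  set φ : ℝ → ℝ := fun t => f (a + t • v) with hφdef
  set p : ℝ → ℝ := fun t => ⟪gradient f (a + t • v), v⟫ with hpdef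
  set q : ℝ → ℝ := fun t => ⟪H (a + t • v) v, v⟫ with hqdef
  have hlinec : Continuous fun t : ℝ => a + t • v :=
    continuous_const.add (continuous_id.smul continuous_const)
  have hline : ∀ t : ℝ, HasDerivAt (fun t : ℝ => a + t • v) v t := fun t => by
    simpa using ((hasDerivAt_id t).smul_const v).const_add a
  have hφ : ∀ t : ℝ, HasDerivAt φ (p t) t := fun t => by
    have h1 : HasGradientAt f (gradient f (a + t • v)) (a + t • v) := (hfd _).hasGradientAt
    have h2 := h1.hasFDerivAt.comp_hasDerivAt t (hline t)
    simpa [InnerProductSpace.toDual_apply_apply, hφdef, hpdef, Function.comp_def] using h2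
  have hp : ∀ t : ℝ, HasDerivAt p (q t) t := fun t => by
    have h2 : HasDerivAt (fun s : ℝ => gradient f (a + s • v)) (H (a + t • v) v) t :=
      (hgd _).hasFDerivAt.comp_hasDerivAt t (hline t)
    simpa [hpdef, hqdef] using h2.inner ℝ (hasDerivAt_const t v)
  have hpc : Continuous p := (hg.continuous.comp hlinec).inner continuous_const
  have hqc : Continuous q := ((hHc.comp hlinec).clm_apply continuous_const).inner continuous_const
  have hq0 : ∀ s ∈ Set.Icc (0:ℝ) 1, |q s - q 0| ≤ L * s * ‖v‖ ^ 3 := by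
    intro s hs
    have e1 : q s - q 0 = ⟪(H (a + s • v) - H (a + (0:ℝ) • v)) v, v⟫ := by
      simp [hqdef, ContinuousLinearMap.sub_apply, inner_sub_left]
    rw [e1]
    have hnorm : ‖(a + s • v) - (a + (0:ℝ) • v)‖ = s * ‖v‖ := by
      simp [norm_smul, abs_of_nonneg hs.1]
    calc |⟪(H (a + s • v) - H (a + (0:ℝ) • v)) v, v⟫|
        ≤ ‖(H (a + s • v) - H (a + (0:ℝ) • v)) v‖ * ‖v‖ := abs_real_inner_le_norm _ _
      _ ≤ ‖H (a + s • v) - H (a + (0:ℝ) • v)‖ * ‖v‖ * ‖v‖ := by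
          gcongr
          exact ContinuousLinearMap.le_opNorm _ _
      _ ≤ (L * ‖(a + s • v) - (a + (0:ℝ) • v)‖) * ‖v‖ * ‖v‖ := by
          gcongr
          exact hLip _ _
      _ = L * s * ‖v‖ ^ 3 := by rw [hnorm]; ring
  have hintq : ∀ t : ℝ, ∫ s in (0:ℝ)..t, q s = p t - p 0 := fun t =>
    integral_eq_sub_of_hasDerivAt (fun s _ => hp s) (hqc.intervalIntegrable 0 t)
  have hA : ∀ t ∈ Set.Icc (0:ℝ) 1, |p t - p 0 - t * q 0| ≤ L / 2 * t ^ 2 * ‖v‖ ^ 3 := by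
    intro t ht
    have e2 : p t - p 0 - t * q 0 = ∫ s in (0:ℝ)..t, (q s - q 0) := by
      rw [integral_sub (hqc.intervalIntegrable _ _) intervalIntegrable_const, hintq t,
        integral_const]
      simp only [smul_eq_mul, sub_zero]
    rw [e2]
    have h1 : |∫ s in (0:ℝ)..t, (q s - q 0)| ≤ ∫ s in (0:ℝ)..t, |q s - q 0| :=
      intervalIntegral.abs_integral_le_integral_abs ht.1
    have h2 : ∫ s in (0:ℝ)..t, |q s - q 0| ≤ ∫ s in (0:ℝ)..t, L * s * ‖v‖ ^ 3 := by
      apply integral_mono_on ht.1 ((hqc.sub continuous_const).abs.intervalIntegrable _ _)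
        (((continuous_const.mul continuous_id).mul continuous_const).intervalIntegrable _ _)
      intro s hs
      exact hq0 s ⟨hs.1, hs.2.trans ht.2⟩
    have h3 : ∫ s in (0:ℝ)..t, L * s * ‖v‖ ^ 3 = L / 2 * t ^ 2 * ‖v‖ ^ 3 := by
      have e : (fun s : ℝ => L * s * ‖v‖ ^ 3) = fun s : ℝ => (L * ‖v‖ ^ 3) * s := by
        funext s; ring
      rw [e, integral_const_mul, integral_id]
      ring
    linarith
  have hintp : ∫ t in (0:ℝ)..1, p t = φ 1 - φ 0 :=
    integral_eq_sub_of_hasDerivAt (fun t _ => hφ t) (hpc.intervalIntegrable 0 1)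
  have e3 : φ 1 - φ 0 - p 0 - 1 / 2 * q 0 = ∫ t in (0:ℝ)..1, (p t - p 0 - t * q 0) := by
    rw [integral_sub (Continuous.intervalIntegrable (by exact hpc.sub continuous_const : Continuous fun t : ℝ => p t - p 0) _ _)
        ((Continuous.intervalIntegrable (by exact continuous_id.mul continuous_const : Continuous fun t : ℝ => t * q 0) _ _)),
      integral_sub (hpc.intervalIntegrable _ _) intervalIntegrable_const, hintp]
    have e : (fun t : ℝ => t * q 0) = fun t : ℝ => q 0 * t := by funext t; ring
    rw [e, integral_const_mul, integral_id, integral_const]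
    simp only [smul_eq_mul, sub_zero, one_pow]
    ring
  have hB : |φ 1 - φ 0 - p 0 - 1 / 2 * q 0| ≤ L / 6 * ‖v‖ ^ 3 := by
    rw [e3]
    have h1 : |∫ t in (0:ℝ)..1, (p t - p 0 - t * q 0)|
        ≤ ∫ t in (0:ℝ)..1, |p t - p 0 - t * q 0| :=
      intervalIntegral.abs_integral_le_integral_abs zero_le_one
    have h2 : ∫ t in (0:ℝ)..1, |p t - p 0 - t * q 0|
        ≤ ∫ t in (0:ℝ)..1, L / 2 * t ^ 2 * ‖v‖ ^ 3 := by
      apply integral_mono_on zero_le_one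
        (((hpc.sub continuous_const).sub (continuous_id.mul continuous_const)).abs.intervalIntegrable _ _)
        (((continuous_const.mul (continuous_pow 2)).mul continuous_const).intervalIntegrable _ _)
      intro t ht
      exact hA t ht
    have h3 : ∫ t in (0:ℝ)..1, L / 2 * t ^ 2 * ‖v‖ ^ 3 = L / 6 * ‖v‖ ^ 3 := by
      have e : (fun t : ℝ => L / 2 * t ^ 2 * ‖v‖ ^ 3) = fun t : ℝ => (L / 2 * ‖v‖ ^ 3) * t ^ 2 := by
        funext t; ring
      rw [e, integral_const_mul, integral_pow]
      norm_num
      ring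
    linarith
  have eφ1 : φ 1 = f (a + v) := by simp [hφdef]
  have eφ0 : φ 0 = f a := by simp [hφdef]
  have ep0 : p 0 = ⟪gradient f a, v⟫ := by simp [hpdef]
  have eq0 : q 0 = ⟪H a v, v⟫ := by simp [hqdef]
  rw [eφ1, eφ0, ep0, eq0] at hB
  exact hB

/-- NEON⁺ Step-4 certificate: if `f` is `C²` with `L₂`-Lipschitz Hessian and
`Δₓ(y,u) = f̂ₓ(y) − f̂ₓ(u) − ⟨∇f̂ₓ(u), y−u⟩ < −(γ/2)‖y−u‖²` with `y ≠ u`,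
where `f̂ₓ(w) = f(x+w) − f(x) − ⟨∇f(x), w⟩` and
`∇f̂ₓ(u) = ∇f(x+u) − ∇f(x)`, then the direction `d = y − u` satisfies
`⟨d, ∇²f(x)d⟩/‖d‖² < −γ + (L₂/3)‖y−u‖ + L₂‖u‖`. -/
theorem stmt10 {d : ℕ} (f : EuclideanSpace ℝ (Fin d) → ℝ) (L₂ : ℝ)
    (hf : ContDiff ℝ 2 f)
    (hLip : ∀ a b : EuclideanSpace ℝ (Fin d),
      ‖fderiv ℝ (gradient f) a - fderiv ℝ (gradient f) b‖ ≤ L₂ * ‖a - b‖)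
    (x : EuclideanSpace ℝ (Fin d)) (γ : ℝ) (hγ : 0 < γ)
    (y u : EuclideanSpace ℝ (Fin d)) (hyu : y ≠ u)
    (hΔ : (f (x + y) - f x - ⟪gradient f x, y⟫)
        - (f (x + u) - f x - ⟪gradient f x, u⟫)
        - ⟪gradient f (x + u) - gradient f x, y - u⟫
        < -(γ / 2) * ‖y - u‖ ^ 2) :
    ⟪y - u, fderiv ℝ (gradient f) x (y - u)⟫ / ‖y - u‖ ^ 2 <
      -γ + L₂ / 3 * ‖y - u‖ + L₂ * ‖u‖ := by
  set H := fderiv ℝ (gradient f) with hH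
  set v := y - u with hv
  set a := x + u with ha
  have hvne : v ≠ 0 := sub_ne_zero.mpr hyu
  have hvpos : 0 < ‖v‖ := norm_pos_iff.mpr hvne
  have hv2 : 0 < ‖v‖ ^ 2 := by positivity
  have key : f (a + v) - f a - ⟪gradient f a, v⟫ < -(γ / 2) * ‖v‖ ^ 2 := by
    have e2 : f (a + v) - f a - ⟪gradient f a, v⟫
        = (f (x + y) - f x - ⟪gradient f x, y⟫) - (f (x + u) - f x - ⟪gradient f x, u⟫)
          - ⟪gradient f (x + u) - gradient f x, y - u⟫ := by
      rw [show a + v = x + y by rw [ha, hv]; abel]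
      simp [ha, hv, inner_sub_left, inner_sub_right]
      ring
    rw [e2]
    exact hΔ
  have hT := taylor2 f L₂ hf hLip a v
  rw [← hH] at hT
  have hT' := abs_le.mp hT
  have h1 : 1 / 2 * ⟪H a v, v⟫ < -(γ / 2) * ‖v‖ ^ 2 + L₂ / 6 * ‖v‖ ^ 3 := by
    linarith [hT'.1]
  have h2 : |⟪H x v, v⟫ - ⟪H a v, v⟫| ≤ L₂ * ‖u‖ * ‖v‖ ^ 2 := by
    have e : ⟪H x v, v⟫ - ⟪H a v, v⟫ = ⟪(H x - H a) v, v⟫ := by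
      simp [ContinuousLinearMap.sub_apply, inner_sub_left]
    rw [e]
    have hxa : ‖x - a‖ = ‖u‖ := by
      rw [ha, show x - (x + u) = -u by abel, norm_neg]
    calc |⟪(H x - H a) v, v⟫|
        ≤ ‖(H x - H a) v‖ * ‖v‖ := abs_real_inner_le_norm _ _
      _ ≤ ‖H x - H a‖ * ‖v‖ * ‖v‖ := by
          gcongr
          exact ContinuousLinearMap.le_opNorm _ _
      _ ≤ (L₂ * ‖x - a‖) * ‖v‖ * ‖v‖ := by
          gcongr
          exact hLip _ _
      _ = L₂ * ‖u‖ * ‖v‖ ^ 2 := by rw [hxa]; ring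
  have h2' := abs_le.mp h2
  have h3 : ⟪H x v, v⟫ < -γ * ‖v‖ ^ 2 + L₂ / 3 * ‖v‖ ^ 3 + L₂ * ‖u‖ * ‖v‖ ^ 2 := by
    linarith [h2'.2]
  rw [real_inner_comm, div_lt_iff₀ hv2]
  nlinarith [h3]
end

section
/- Let f : ℝᵈ → ℝ be twice continuously differentiable with L₂-Lipschitz continuous Hessian (‖∇²f(a) − ∇²f(b)‖ ≤ L₂‖a − b‖ in operator norm for all a, b), L₂ > 0. Let x ∈ ℝᵈ, γ > 0, α > 0, c > 0, and let v ∈ ℝᵈ be a unit vector with ⟨v, ∇²f(x)v⟩ ≤ −αγ. Let σ ∈ {−1, +1} be such that σ⟨∇f(x), v⟩ ≥ 0, and set x' = x − (cγ/L₂)σv. Then f(x') ≤ f(x) − (α/2 − c/6)·c²γ³/L₂². -/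
open RealInnerProductSpace
open InnerProductSpace

lemma taylor_cubic {d : ℕ} (f : EuclideanSpace ℝ (Fin d) → ℝ) (L₂ : ℝ)
    (hL₂ : 0 ≤ L₂) (hf : ContDiff ℝ 2 f)
    (hLip : ∀ a b : EuclideanSpace ℝ (Fin d),
      ‖fderiv ℝ (gradient f) a - fderiv ℝ (gradient f) b‖ ≤ L₂ * ‖a - b‖)
    (x u : EuclideanSpace ℝ (Fin d)) :
    f (x + u) ≤ f x + ⟪u, gradient f x⟫ + ⟪u, fderiv ℝ (gradient f) x u⟫ / 2
      + L₂ * ‖u‖ ^ 3 / 6 := by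
  have hfd : Differentiable ℝ f := hf.differentiable (by norm_num)
  have hgrad : ContDiff ℝ 1 (gradient f) :=
    (toDual ℝ (EuclideanSpace ℝ (Fin d))).symm.contDiff.comp (hf.fderiv_right (by norm_num))
  have hgd : Differentiable ℝ (gradient f) := hgrad.differentiable one_ne_zero
  set K := L₂ * ‖u‖ ^ 3 with hKdef
  have hK0 : 0 ≤ K := by positivity
  set g : ℝ → ℝ := fun t => f (x + t • u) with hgdef
  set g1 : ℝ → ℝ := fun t => ⟪u, gradient f (x + t • u)⟫ with hg1def
  set g2 : ℝ → ℝ := fun t => ⟪u, fderiv ℝ (gradient f) (x + t • u) u⟫ with hg2def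
  have hline : ∀ t : ℝ, HasDerivAt (fun s : ℝ => x + s • u) u t := by
    intro t
    have := ((hasDerivAt_id t).smul_const u).const_add x
    simpa using this
  -- derivative of g
  have hg' : ∀ t : ℝ, HasDerivAt g (g1 t) t := by
    intro t
    have h0 := (hfd (x + t • u)).hasFDerivAt.comp_hasDerivAt t (hline t)
    have heq : fderiv ℝ f (x + t • u) u = g1 t := by
      simp only [hg1def]
      rw [real_inner_comm]
      exact (InnerProductSpace.toDual_symm_apply).symm
    rw [← heq]
    exact h0
  -- derivative of g1
  have hg1' : ∀ t : ℝ, HasDerivAt g1 (g2 t) t := by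
    intro t
    have h0 := (hgd (x + t • u)).hasFDerivAt.comp_hasDerivAt t (hline t)
    have h1 := ((innerSL ℝ u).hasFDerivAt
      (x := gradient f (x + t • u))).comp_hasDerivAt t h0
    exact h1
  -- Lipschitz bound on g2
  have hg2b : ∀ t : ℝ, 0 ≤ t → g2 t ≤ g2 0 + K * t := by
    intro t ht
    have h1 : g2 t - g2 0 =
        ⟪u, (fderiv ℝ (gradient f) (x + t • u) - fderiv ℝ (gradient f) (x + (0:ℝ) • u)) u⟫ := by
      simp [hg2def, ContinuousLinearMap.sub_apply, inner_sub_right]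
    have h2 := real_inner_le_norm u
      ((fderiv ℝ (gradient f) (x + t • u) - fderiv ℝ (gradient f) (x + (0:ℝ) • u)) u)
    have h3 := (fderiv ℝ (gradient f) (x + t • u) -
      fderiv ℝ (gradient f) (x + (0:ℝ) • u)).le_opNorm u
    have h4 := hLip (x + t • u) (x + (0:ℝ) • u)
    have h5 : ‖x + t • u - (x + (0:ℝ) • u)‖ = t * ‖u‖ := by
      simp [norm_smul, abs_of_nonneg ht]
    rw [h5] at h4
    have hu0 : (0:ℝ) ≤ ‖u‖ := norm_nonneg u
    have h6 := mul_le_mul_of_nonneg_left h3 hu0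
    have h7 := mul_le_mul_of_nonneg_left (mul_le_mul_of_nonneg_right h4 hu0) hu0
    have h8 : ‖u‖ * (L₂ * (t * ‖u‖) * ‖u‖) = K * t := by rw [hKdef]; ring
    rw [h8] at h7
    linarith
  -- p ≤ 0 on [0,1]
  set p : ℝ → ℝ := fun t => g1 t - (g1 0 + t * g2 0 + K * t ^ 2 / 2) with hpdef
  have hp' : ∀ t : ℝ, HasDerivAt p (g2 t - (g2 0 + K * t)) t := by
    intro t
    have ha : HasDerivAt (fun s : ℝ => g1 0 + s * g2 0 + K * s ^ 2 / 2) (g2 0 + K * t) t := by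
      have h1 : HasDerivAt (fun s : ℝ => s * g2 0) (g2 0) t := by
        simpa using (hasDerivAt_id t).mul_const (g2 0)
      have h2 : HasDerivAt (fun s : ℝ => K * s ^ 2 / 2) (K * t) t := by
        have h3 : HasDerivAt (fun s : ℝ => s ^ 2) (2 * t) t := by
          simpa using hasDerivAt_pow 2 t
        have := (h3.const_mul K).div_const 2
        exact this.congr_deriv (by ring)
      exact (h1.const_add (g1 0)).add h2
    exact (hg1' t).sub ha
  have hple : ∀ t ∈ Set.Icc (0:ℝ) 1, p t ≤ 0 := by
    have hanti : AntitoneOn p (Set.Icc 0 1) := by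
      apply antitoneOn_of_deriv_nonpos (convex_Icc 0 1)
      · exact (Differentiable.continuous fun t => (hp' t).differentiableAt).continuousOn
      · exact fun t ht => ((hp' t).differentiableAt).differentiableWithinAt
      · intro t ht
        rw [interior_Icc] at ht
        rw [(hp' t).deriv]
        have := hg2b t ht.1.le
        linarith
    intro t ht
    have h0 : p 0 = 0 := by simp [hpdef]
    have := hanti (Set.left_mem_Icc.mpr zero_le_one) ht ht.1
    linarith
  -- q antitone
  set q : ℝ → ℝ := fun t => g t - (g 0 + t * g1 0 + t ^ 2 / 2 * g2 0 + K * t ^ 3 / 6) with hqdef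
  have hq' : ∀ t : ℝ, HasDerivAt q (p t) t := by
    intro t
    have ha : HasDerivAt (fun s : ℝ => g 0 + s * g1 0 + s ^ 2 / 2 * g2 0 + K * s ^ 3 / 6)
        (g1 0 + t * g2 0 + K * t ^ 2 / 2) t := by
      have h1 : HasDerivAt (fun s : ℝ => s * g1 0) (g1 0) t := by
        simpa using (hasDerivAt_id t).mul_const (g1 0)
      have h2 : HasDerivAt (fun s : ℝ => s ^ 2 / 2 * g2 0) (t * g2 0) t := by
        have h3 : HasDerivAt (fun s : ℝ => s ^ 2) (2 * t) t := by
          simpa using hasDerivAt_pow 2 t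
        have := (h3.div_const 2).mul_const (g2 0)
        exact this.congr_deriv (by ring)
      have h4 : HasDerivAt (fun s : ℝ => K * s ^ 3 / 6) (K * t ^ 2 / 2) t := by
        have h5 : HasDerivAt (fun s : ℝ => s ^ 3) (3 * t ^ 2) t := by
          simpa using hasDerivAt_pow 3 t
        have := (h5.const_mul K).div_const 6
        exact this.congr_deriv (by ring)
      exact ((h1.const_add (g 0)).add h2).add h4
    have := (hg' t).sub ha
    exact this
  have hq1 : q 1 ≤ 0 := by
    have hanti : AntitoneOn q (Set.Icc 0 1) := by
      apply antitoneOn_of_deriv_nonpos (convex_Icc 0 1)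
      · exact (Differentiable.continuous fun t => (hq' t).differentiableAt).continuousOn
      · exact fun t ht => ((hq' t).differentiableAt).differentiableWithinAt
      · intro t ht
        rw [interior_Icc] at ht
        rw [(hq' t).deriv]
        exact hple t ⟨ht.1.le, ht.2.le⟩
    have h0 : q 0 = 0 := by simp [hqdef]
    have := hanti (Set.left_mem_Icc.mpr zero_le_one) (Set.right_mem_Icc.mpr zero_le_one)
      zero_le_one
    linarith
  have hexp : q 1 = f (x + u) - (f x + ⟪u, gradient f x⟫ + ⟪u, fderiv ℝ (gradient f) x u⟫ / 2
      + K / 6) := by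
    simp [hqdef, hgdef, hg1def, hg2def]
    ring
  rw [hexp] at hq1
  linarith


/-- Per-step decrease of negative curvature descent: if `f` is `C²` with
`L₂`-Lipschitz Hessian (`L₂ > 0`), `v` is a unit vector with
`⟨v, ∇²f(x)v⟩ ≤ −αγ`, `σ ∈ {−1, 1}` with `σ⟨∇f(x), v⟩ ≥ 0`, and
`x' = x − (cγ/L₂)σv`, then `f(x') ≤ f(x) − (α/2 − c/6)c²γ³/L₂²`. -/
theorem stmt11 {d : ℕ} (f : EuclideanSpace ℝ (Fin d) → ℝ) (L₂ : ℝ)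
    (hL₂ : 0 < L₂) (hf : ContDiff ℝ 2 f)
    (hLip : ∀ a b : EuclideanSpace ℝ (Fin d),
      ‖fderiv ℝ (gradient f) a - fderiv ℝ (gradient f) b‖ ≤ L₂ * ‖a - b‖)
    (x : EuclideanSpace ℝ (Fin d)) (γ α c : ℝ) (hγ : 0 < γ) (hα : 0 < α)
    (hc : 0 < c) (v : EuclideanSpace ℝ (Fin d)) (hv : ‖v‖ = 1)
    (hnc : ⟪v, fderiv ℝ (gradient f) x v⟫ ≤ -(α * γ))
    (σ : ℝ) (hσ : σ = -1 ∨ σ = 1) (hsign : 0 ≤ σ * ⟪gradient f x, v⟫) :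
    f (x - (c * γ / L₂) • (σ • v)) ≤
      f x - (α / 2 - c / 6) * (c ^ 2 * γ ^ 3 / L₂ ^ 2) := by
  have hσ2 : σ ^ 2 = 1 := by rcases hσ with h | h <;> rw [h] <;> norm_num
  have hσabs : |σ| = 1 := by rcases hσ with h | h <;> rw [h] <;> norm_num
  have hs0 : (0:ℝ) < c * γ / L₂ := by positivity
  set s : ℝ := -(c * γ / L₂) * σ with hsdef
  set u : EuclideanSpace ℝ (Fin d) := s • v with hu
  have hxeq : x - (c * γ / L₂) • (σ • v) = x + u := by
    rw [hu, hsdef, smul_smul, sub_eq_add_neg, ← neg_smul]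
    ring_nf
  have key := taylor_cubic f L₂ hL₂.le hf hLip x u
  rw [hxeq]
  have hnorm : ‖u‖ = c * γ / L₂ := by
    rw [hu, norm_smul, hv, mul_one, hsdef, Real.norm_eq_abs, abs_mul, hσabs, mul_one, abs_neg,
      abs_of_pos hs0]
  have h1 : ⟪u, gradient f x⟫ = -(c * γ / L₂) * (σ * ⟪gradient f x, v⟫) := by
    rw [hu, real_inner_smul_left, real_inner_comm, hsdef]; ring
  have h2 : ⟪u, fderiv ℝ (gradient f) x u⟫
      = (c * γ / L₂) ^ 2 * (σ ^ 2 * ⟪v, fderiv ℝ (gradient f) x v⟫) := by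
    rw [hu, map_smul, real_inner_smul_left, real_inner_smul_right, hsdef]; ring
  have hb1 : ⟪u, gradient f x⟫ ≤ 0 := by
    rw [h1]
    nlinarith
  have hb2 : ⟪u, fderiv ℝ (gradient f) x u⟫ ≤ (c * γ / L₂) ^ 2 * (-(α * γ)) := by
    rw [h2, hσ2, one_mul]
    exact mul_le_mul_of_nonneg_left hnc (by positivity)
  rw [hnorm] at key
  have hfin : (c * γ / L₂) ^ 2 * (-(α * γ)) / 2 + L₂ * (c * γ / L₂) ^ 3 / 6
      = -((α / 2 - c / 6) * (c ^ 2 * γ ^ 3 / L₂ ^ 2)) := by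
    field_simp
    ring
  linarith
end
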